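/- Let T₁ be a finite Blaschke product of degree n ≥ 1 and T₂ a finite Blaschke product of degree m ≥ 1. Then the composition T₂ ∘ T₁ agrees on the closed unit disc with a finite Blaschke product of degree n·m: there exist ρ ∈ ℂ with |ρ| = 1 and ζ_1, …, ζ_{nm} ∈ ℂ with |ζ_j| < 1 such that T₂(T₁(z)) = ρ ∏_{j=1}^{nm} (z − ζ_j)/(1 − conj(ζ_j) z) for every z ∈ ℂ with |z| ≤ 1. -/

import Mathlib

/-!
A Blaschke product with zeros `ζ` is `B = ρ M / M*`, where `M = ∏ (X - ζᵢ)` and `M*` is its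
conjugate reciprocal polynomial. For `‖a‖ < 1` the disc automorphism `φₐ w = (w - a) / (1 - ā w)`
gives `φₐ ∘ B = R / (ρ R*)` with `R = ρ M - a M*`. This `R` has the same degree as `M`, and its
roots lie in the open disc: for `‖x‖ ≥ 1` every factor satisfies `‖1 - ζ̄ x‖ ≤ ‖x - ζ‖`, so
`‖M* x‖ ≤ ‖M x‖`, and `R x = 0` would force `M x = 0`. Factoring `R` over `ℂ` shows that `φₐ ∘ B`
is again a Blaschke product of degree `deg B`. Since `T₂ = ρ₂ ∏ₖ φ_{ζ₂ k}`, the composite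
`T₂ ∘ T₁` is a unimodular constant times a product of `m` Blaschke products of degree `n`.
-/

open Complex Metric Polynomial Finset

namespace Polynomial

section Reflect

variable {R ι : Type*} [CommSemiring R]

theorem reflect_prod (s : Finset ι) (f : ι → R[X]) (N : ι → ℕ)
    (hf : ∀ i ∈ s, (f i).natDegree ≤ N i) :
    reflect (∑ i ∈ s, N i) (∏ i ∈ s, f i) = ∏ i ∈ s, reflect (N i) (f i) := by
  classical
  induction s using Finset.induction_on with
  | empty => simp
  | insert j s hj ih =>
    have hs : (∏ i ∈ s, f i).natDegree ≤ ∑ i ∈ s, N i :=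
      (natDegree_prod_le _ _).trans (sum_le_sum fun i hi => hf i (mem_insert_of_mem hi))
    rw [prod_insert hj, sum_insert hj, prod_insert hj,
      reflect_mul _ _ (hf j (mem_insert_self j s)) hs, ih fun i hi => hf i (mem_insert_of_mem hi)]

end Reflect

section StarReflect

variable {R ι : Type*} [CommRing R] [StarRing R]

/-- The conjugate reciprocal `p*(z) = z ^ N * conj (p (1 / conj z))` of a polynomial of degree
at most `N`. -/
noncomputable def starReflect (N : ℕ) (p : R[X]) : R[X] :=
  reflect N (p.map (starRingEnd R))

variable (N : ℕ) (p q : R[X])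

@[simp]
theorem starReflect_starReflect : starReflect N (starReflect N p) = p := by
  simp [starReflect, reflect_map, Polynomial.map_map]

theorem starReflect_sub : starReflect N (p - q) = starReflect N p - starReflect N q := by
  simp [starReflect, reflect_sub]

theorem starReflect_C_mul (a : R) :
    starReflect N (C a * p) = C (starRingEnd R a) * starReflect N p := by
  simp [starReflect, reflect_C_mul]

theorem coeff_starReflect (i : ℕ) :
    (starReflect N p).coeff i = starRingEnd R (p.coeff (revAt N i)) := by
  simp [starReflect, coeff_reflect]

theorem natDegree_starReflect_le : (starReflect N p).natDegree ≤ max N p.natDegree :=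
  natDegree_reflect_le.trans (max_le_max le_rfl natDegree_map_le)

theorem starReflect_prod_X_sub_C [Fintype ι] (w : ι → R) :
    starReflect (Fintype.card ι) (∏ i, (X - C (w i))) =
      ∏ i, (1 - C (starRingEnd R (w i)) * X) := by
  have h := reflect_prod univ (fun i => X - C (starRingEnd R (w i))) (fun _ => 1)
    fun i _ => natDegree_X_sub_C_le _
  simp only [sum_const, card_univ, smul_eq_mul, mul_one] at h
  simp only [starReflect, Polynomial.map_prod, Polynomial.map_sub, map_X, map_C, h]
  refine prod_congr rfl fun i _ => ?_
  rw [reflect_sub, reflect_C, pow_one, ← pow_one X, reflect_monomial, revAt_le le_rfl, pow_zero]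

end StarReflect

theorem exists_eq_C_leadingCoeff_mul_prod_X_sub_C {K ι : Type*} [Field K] [IsAlgClosed K]
    [Fintype ι] (p : K[X]) (hp : p.natDegree = Fintype.card ι) :
    ∃ w : ι → K, (∀ i, w i ∈ p.roots) ∧ p = C p.leadingCoeff * ∏ i, (X - C (w i)) := by
  classical
  have hcard : Fintype.card ι = Fintype.card p.roots := by
    rw [Multiset.card_coe, IsAlgClosed.card_roots_eq_natDegree, hp]
  let e := Fintype.equivOfCardEq hcard
  refine ⟨fun i => e i, fun i => Multiset.coe_mem, ?_⟩
  conv_lhs =>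
    rw [← C_leadingCoeff_mul_prod_multiset_X_sub_C (IsAlgClosed.card_roots_eq_natDegree (p := p))]
  rw [← Multiset.map_univ, ← Finset.prod_eq_multiset_prod,
    ← e.prod_comp (fun x : p.roots => X - C (x : K))]

end Polynomial

open ComplexConjugate

section Blaschke

variable {ι κ : Type*} [Fintype ι] [Fintype κ]

noncomputable def blaschke (ρ : ℂ) (ζ : ι → ℂ) (z : ℂ) : ℂ :=
  ρ * ∏ i, (z - ζ i) / (1 - conj (ζ i) * z)

theorem normSq_one_sub_conj_mul_sub_normSq_sub (ζ z : ℂ) :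
    normSq (1 - conj ζ * z) - normSq (z - ζ) = (1 - normSq z) * (1 - normSq ζ) := by
  simp only [normSq_apply, mul_re, mul_im, sub_re, sub_im, one_re, one_im, conj_re, conj_im]
  ring

theorem norm_one_sub_conj_mul_le_norm_sub {ζ z : ℂ} (hζ : ‖ζ‖ ≤ 1) (hz : 1 ≤ ‖z‖) :
    ‖1 - conj ζ * z‖ ≤ ‖z - ζ‖ := by
  have h := normSq_one_sub_conj_mul_sub_normSq_sub ζ z
  simp only [normSq_eq_norm_sq] at h
  have hz' : 1 - ‖z‖ ^ 2 ≤ 0 := by nlinarith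
  have hζ' : 0 ≤ 1 - ‖ζ‖ ^ 2 := by nlinarith [norm_nonneg ζ]
  rw [← sq_le_sq₀ (norm_nonneg _) (norm_nonneg _)]
  linarith [mul_nonpos_of_nonpos_of_nonneg hz' hζ']

theorem one_sub_conj_mul_ne_zero {ζ z : ℂ} (hζ : ‖ζ‖ < 1) (hz : ‖z‖ ≤ 1) :
    1 - conj ζ * z ≠ 0 := by
  refine sub_ne_zero.mpr (ne_of_apply_ne norm (ne_of_gt ?_))
  rw [norm_one, norm_mul, norm_conj]
  exact (mul_le_of_le_one_right (norm_nonneg ζ) hz).trans_lt hζ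

theorem blaschke_eq_eval_div_eval_starReflect (ρ : ℂ) (ζ : ι → ℂ) (z : ℂ) :
    blaschke ρ ζ z = ρ * ((∏ i, (X - C (ζ i))).eval z /
      (starReflect (Fintype.card ι) (∏ i, (X - C (ζ i)))).eval z) := by
  simp [blaschke, starReflect_prod_X_sub_C, eval_prod, prod_div_distrib]

theorem eval_div_eval_starReflect_C_mul_prod (c : ℂ) (w : ι → ℂ) (z : ℂ) :
    (C c * ∏ i, (X - C (w i))).eval z /
      (starReflect (Fintype.card ι) (C c * ∏ i, (X - C (w i)))).eval z =
    blaschke (c / conj c) w z := by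
  rw [starReflect_C_mul, eval_mul, eval_mul, eval_C, eval_C, mul_div_mul_comm,
    blaschke_eq_eval_div_eval_starReflect]

theorem blaschke_comp_equiv (e : κ ≃ ι) (ρ : ℂ) (ζ : ι → ℂ) :
    blaschke ρ (ζ ∘ e) = blaschke ρ ζ := by
  ext z
  exact congrArg (ρ * ·) (e.prod_comp fun i => (z - ζ i) / (1 - conj (ζ i) * z))

theorem degree_C_mul_prod_sub_C_mul_starReflect {ρ a : ℂ} (hρ : ‖ρ‖ = 1) (ha : ‖a‖ < 1)
    {ζ : ι → ℂ} (hζ : ∀ i, ‖ζ i‖ ≤ 1) :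
    (C ρ * ∏ i, (X - C (ζ i)) -
      C a * starReflect (Fintype.card ι) (∏ i, (X - C (ζ i)))).degree =
      (Fintype.card ι : WithBot ℕ) := by
  set n := Fintype.card ι
  set M : ℂ[X] := ∏ i, (X - C (ζ i))
  have hM : M.natDegree = n := by simp [M, n]
  have hM_monic : M.Monic := monic_prod_of_monic _ _ fun i _ => monic_X_sub_C (ζ i)
  have hMstar : (starReflect n M).natDegree ≤ n :=
    (natDegree_starReflect_le n M).trans (by rw [hM, max_self])
  have hcoeff : ‖(starReflect n M).coeff n‖ ≤ 1 := by
    rw [coeff_starReflect, revAt_le le_rfl, Nat.sub_self, norm_conj, coeff_zero_eq_eval_zero,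
      eval_prod, norm_prod]
    exact prod_le_one (fun _ _ => norm_nonneg _) fun i _ => by simpa using hζ i
  refine degree_eq_of_le_of_coeff_ne_zero (degree_le_of_natDegree_le ?_) fun h => ?_
  · simpa using natDegree_sub_le_of_le ((natDegree_C_mul_le ρ M).trans hM.le)
      ((natDegree_C_mul_le a _).trans hMstar)
  -- the top coefficient is `ρ - a * conj (M 0)`, and `‖a * M 0‖ < 1 = ‖ρ‖`
  · rw [coeff_sub, coeff_C_mul, coeff_C_mul, ← hM, hM_monic.coeff_natDegree, hM, mul_one,
      sub_eq_zero] at h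
    have : ‖a‖ * ‖(starReflect n M).coeff n‖ < 1 :=
      (mul_le_of_le_one_right (norm_nonneg a) hcoeff).trans_lt ha
    rw [← norm_mul, ← h, hρ] at this
    exact this.false

theorem norm_lt_one_of_mem_roots_C_mul_prod_sub_C_mul_starReflect {ρ a x : ℂ} (hρ : ‖ρ‖ = 1)
    (ha : ‖a‖ < 1) {ζ : ι → ℂ} (hζ : ∀ i, ‖ζ i‖ < 1)
    (hx : x ∈ (C ρ * ∏ i, (X - C (ζ i)) -
      C a * starReflect (Fintype.card ι) (∏ i, (X - C (ζ i)))).roots) :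
    ‖x‖ < 1 := by
  by_contra! hx1
  set M : ℂ[X] := ∏ i, (X - C (ζ i))
  have hroot : ρ * M.eval x = a * (starReflect (Fintype.card ι) M).eval x := by
    simpa [sub_eq_zero] using isRoot_of_mem_roots hx
  have hle : ‖(starReflect (Fintype.card ι) M).eval x‖ ≤ ‖M.eval x‖ := by
    simp only [M, starReflect_prod_X_sub_C, eval_prod, eval_sub, eval_one, eval_mul, eval_C,
      eval_X, norm_prod]
    exact prod_le_prod (fun _ _ => norm_nonneg _)
      fun i _ => norm_one_sub_conj_mul_le_norm_sub (hζ i).le hx1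
  have hM : M.eval x = 0 := by
    have h := congrArg norm hroot
    rw [norm_mul, norm_mul, hρ, one_mul] at h
    have : ‖M.eval x‖ ≤ ‖a‖ * ‖M.eval x‖ := h.le.trans (by gcongr)
    exact norm_le_zero_iff.mp (by nlinarith [norm_nonneg (M.eval x)])
  obtain ⟨i, -, hi⟩ := prod_eq_zero_iff.mp (by simpa [M, eval_prod] using hM)
  rw [sub_eq_zero.mp hi] at hx1
  exact (hζ i).not_ge hx1

theorem exists_blaschke_eq_factor_comp_blaschke {ρ a : ℂ} (hρ : ‖ρ‖ = 1) (ha : ‖a‖ < 1)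
    {ζ : ι → ℂ} (hζ : ∀ i, ‖ζ i‖ < 1) :
    ∃ (σ : ℂ) (w : ι → ℂ), ‖σ‖ = 1 ∧ (∀ i, ‖w i‖ < 1) ∧ ∀ z ∈ closedBall (0 : ℂ) 1,
      (blaschke ρ ζ z - a) / (1 - conj a * blaschke ρ ζ z) = blaschke σ w z := by
  set M : ℂ[X] := ∏ i, (X - C (ζ i))
  set R := C ρ * M - C a * starReflect (Fintype.card ι) M with hR
  have hRdeg : R.degree = (Fintype.card ι : WithBot ℕ) :=
    degree_C_mul_prod_sub_C_mul_starReflect hρ ha fun i => (hζ i).le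
  have hc : R.leadingCoeff ≠ 0 := leadingCoeff_ne_zero.mpr fun h => by simp [h] at hRdeg
  have hRstar : starReflect (Fintype.card ι) M - C (conj a) * (C ρ * M) =
      C ρ * starReflect (Fintype.card ι) R := by
    have hρρ : C ρ * C (conj ρ) = (1 : ℂ[X]) := by
      rw [← C_mul, mul_conj, normSq_eq_norm_sq, hρ]; norm_num
    rw [hR, starReflect_sub, starReflect_C_mul, starReflect_C_mul, starReflect_starReflect]
    linear_combination (-(starReflect (Fintype.card ι) M)) * hρρ
  obtain ⟨w, hw_roots, hfac⟩ :=
    exists_eq_C_leadingCoeff_mul_prod_X_sub_C R (natDegree_eq_of_degree_eq_some hRdeg)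
  refine ⟨conj ρ * (R.leadingCoeff / conj R.leadingCoeff), w, ?_, fun i =>
    norm_lt_one_of_mem_roots_C_mul_prod_sub_C_mul_starReflect hρ ha hζ (hw_roots i), ?_⟩
  · rw [norm_mul, norm_div, norm_conj, norm_conj, hρ, div_self (norm_ne_zero_iff.mpr hc), one_mul]
  intro z hz
  have hQ : (starReflect (Fintype.card ι) M).eval z ≠ 0 := by
    simpa [M, starReflect_prod_X_sub_C, eval_prod, prod_eq_zero_iff] using
      fun i => one_sub_conj_mul_ne_zero (hζ i) (mem_closedBall_zero_iff.mp hz)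
  have hRz := congrArg (eval z) hR
  have hRstar_z := congrArg (eval z) hRstar
  simp only [eval_sub, eval_mul, eval_C] at hRz hRstar_z
  have hB : blaschke ρ ζ z = ρ * (M.eval z / (starReflect (Fintype.card ι) M).eval z) :=
    blaschke_eq_eval_div_eval_starReflect ρ ζ z
  calc (blaschke ρ ζ z - a) / (1 - conj a * blaschke ρ ζ z)
      = (R.eval z / (starReflect (Fintype.card ι) M).eval z) /
          (ρ * (starReflect (Fintype.card ι) R).eval z /
            (starReflect (Fintype.card ι) M).eval z) := by
        rw [hB, hRz, ← hRstar_z]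
        congr 1 <;> field_simp
    _ = conj ρ * (R.eval z / (starReflect (Fintype.card ι) R).eval z) := by
        rw [div_div_div_cancel_right₀ hQ, mul_comm ρ, ← div_div, div_eq_mul_inv _ ρ,
          inv_eq_conj hρ, mul_comm]
    _ = blaschke (conj ρ * (R.leadingCoeff / conj R.leadingCoeff)) w z := by
        conv_lhs => rw [hfac, eval_div_eval_starReflect_C_mul_prod]
        simp only [blaschke, mul_assoc]

theorem exists_blaschke_eq_blaschke_comp_blaschke {ρ₁ ρ₂ : ℂ} (hρ₁ : ‖ρ₁‖ = 1) (hρ₂ : ‖ρ₂‖ = 1)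
    {ζ₁ : ι → ℂ} (hζ₁ : ∀ i, ‖ζ₁ i‖ < 1) {ζ₂ : κ → ℂ} (hζ₂ : ∀ k, ‖ζ₂ k‖ < 1) :
    ∃ (ρ : ℂ) (ζ : κ × ι → ℂ), ‖ρ‖ = 1 ∧ (∀ j, ‖ζ j‖ < 1) ∧
      ∀ z ∈ closedBall (0 : ℂ) 1, blaschke ρ₂ ζ₂ (blaschke ρ₁ ζ₁ z) = blaschke ρ ζ z := by
  choose σ w hσ hw hcomp using fun k => exists_blaschke_eq_factor_comp_blaschke hρ₁ (hζ₂ k) hζ₁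
  refine ⟨ρ₂ * ∏ k, σ k, fun p => w p.1 p.2, ?_, fun p => hw p.1 p.2, fun z hz => ?_⟩
  · rw [norm_mul, norm_prod, hρ₂, one_mul, prod_eq_one fun k _ => hσ k]
  calc blaschke ρ₂ ζ₂ (blaschke ρ₁ ζ₁ z) = ρ₂ * ∏ k, blaschke (σ k) (w k) z := by
        change ρ₂ * ∏ k, (blaschke ρ₁ ζ₁ z - ζ₂ k) / (1 - conj (ζ₂ k) * blaschke ρ₁ ζ₁ z) = _
        simp only [hcomp _ z hz]
    _ = blaschke (ρ₂ * ∏ k, σ k) (fun p : κ × ι => w p.1 p.2) z := by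
        simp only [blaschke, Fintype.prod_prod_type, prod_mul_distrib, mul_assoc]

end Blaschke

theorem blaschke_comp_blaschke_general
    (n m : ℕ)
    (ρ₁ ρ₂ : ℂ) (hρ₁ : ‖ρ₁‖ = 1) (hρ₂ : ‖ρ₂‖ = 1)
    (ζ₁ : Fin n → ℂ) (hζ₁ : ∀ i, ‖ζ₁ i‖ < 1)
    (ζ₂ : Fin m → ℂ) (hζ₂ : ∀ i, ‖ζ₂ i‖ < 1)
    (T₁ T₂ : ℂ → ℂ)
    (hT₁ : ∀ z, T₁ z = ρ₁ * ∏ i, (z - ζ₁ i) / (1 - (starRingEnd ℂ) (ζ₁ i) * z))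
    (hT₂ : ∀ z, T₂ z = ρ₂ * ∏ i, (z - ζ₂ i) / (1 - (starRingEnd ℂ) (ζ₂ i) * z)) :
    ∃ (ρ : ℂ) (ζ : Fin (n * m) → ℂ), ‖ρ‖ = 1 ∧
      (∀ j, ‖ζ j‖ < 1) ∧
      ∀ z ∈ closedBall (0 : ℂ) 1,
        T₂ (T₁ z) = ρ * ∏ j, (z - ζ j) / (1 - (starRingEnd ℂ) (ζ j) * z) := by
  obtain rfl : T₁ = blaschke ρ₁ ζ₁ := funext hT₁
  obtain rfl : T₂ = blaschke ρ₂ ζ₂ := funext hT₂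
  obtain ⟨ρ, ζ, hρ, hζ, hcomp⟩ := exists_blaschke_eq_blaschke_comp_blaschke hρ₁ hρ₂ hζ₁ hζ₂
  let e : Fin (n * m) ≃ Fin m × Fin n := (finCongr (mul_comm n m)).trans finProdFinEquiv.symm
  refine ⟨ρ, ζ ∘ e, hρ, fun j => hζ (e j), fun z hz => ?_⟩
  rw [hcomp z hz, ← blaschke_comp_equiv e]
  rfl

/-- The composition of two finite Blaschke products of degrees `n` and `m` agrees
on the closed unit disc with a finite Blaschke product of degree `n * m`. -/
theorem blaschke_comp_blaschke
    (n m : ℕ) (hn : 1 ≤ n) (hm : 1 ≤ m)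
    (ρ₁ ρ₂ : ℂ) (hρ₁ : ‖ρ₁‖ = 1) (hρ₂ : ‖ρ₂‖ = 1)
    (ζ₁ : Fin n → ℂ) (hζ₁ : ∀ i, ‖ζ₁ i‖ < 1)
    (ζ₂ : Fin m → ℂ) (hζ₂ : ∀ i, ‖ζ₂ i‖ < 1)
    (T₁ T₂ : ℂ → ℂ)
    (hT₁ : ∀ z, T₁ z = ρ₁ * ∏ i, (z - ζ₁ i) / (1 - (starRingEnd ℂ) (ζ₁ i) * z))
    (hT₂ : ∀ z, T₂ z = ρ₂ * ∏ i, (z - ζ₂ i) / (1 - (starRingEnd ℂ) (ζ₂ i) * z)) :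
    ∃ (ρ : ℂ) (ζ : Fin (n * m) → ℂ), ‖ρ‖ = 1 ∧
      (∀ j, ‖ζ j‖ < 1) ∧
      ∀ z ∈ closedBall (0 : ℂ) 1,
        T₂ (T₁ z) = ρ * ∏ j, (z - ζ j) / (1 - (starRingEnd ℂ) (ζ j) * z) :=
  blaschke_comp_blaschke_general n m ρ₁ ρ₂ hρ₁ hρ₂ ζ₁ hζ₁ ζ₂ hζ₂ T₁ T₂ hT₁ hT₂
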